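/- arXiv:1808.09760 — 3 statements merged into one kernel-verified Lean document; each statement's English description precedes it below -/
import Mathlib

section
/- Let ν ∈ {1,−1}, z₀ ∈ F_N(ℝ²), and suppose Z(t) = exp(−νtJ_N)z₀ solves the whole-plane system M_Γ ż = J_N ∇H₀(z). Then: (i) every constant function t ↦ â with â ∈ D, the function t ↦ Ż(t), and the function t ↦ Z(t) − 2tŻ(t) solve the linearized equation v̇ = M_Γ⁻¹J_N∇²H₀(Z(t))v; (ii) consequently the fundamental solution X₀ (X₀'(t)=M_Γ⁻¹J_N∇²H₀(Z(t))X₀(t), X₀(0)=Id) satisfies, for all t ∈ ℝ and â ∈ D: X₀(t)â = â, X₀(t)(J_N z₀) = exp(−νtJ_N) J_N z₀, and X₀(t) z₀ = exp(−νtJ_N)(z₀ + 2tν J_N z₀). -/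
noncomputable section

open Real Set Asymptotics Polynomial Function
open scoped Topology
open scoped BigOperators RealInnerProductSpace

/-- The plane `ℝ²`. -/
abbrev V2 : Type := EuclideanSpace ℝ (Fin 2)

def mkV2 (f : Fin 2 → ℝ) : V2 := WithLp.toLp 2 f

/-- Phase space `ℝ^{2N}` of `N` planar points. -/
abbrev Ph (N : ℕ) : Type := EuclideanSpace ℝ (Fin N × Fin 2)

def mkPh {N : ℕ} (f : Fin N × Fin 2 → ℝ) : Ph N := WithLp.toLp 2 f

/-- The `j`-th planar component `z_j` of `z ∈ ℝ^{2N}`. -/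
def comp2 {N : ℕ} (z : Ph N) (j : Fin N) : V2 := mkV2 fun i => z (j, i)

/-- The collision-free configuration set `F_N(ℝ²)`. -/
def FNset (N : ℕ) : Set (Ph N) :=
  {z | ∀ j k : Fin N, j ≠ k → comp2 z j ≠ comp2 z k}

/-- The diagonal vector `â = (a,…,a) ∈ ℝ^{2N}`. -/
def diagPh (N : ℕ) (a : V2) : Ph N := mkPh fun p => a p.2

/-- The diagonal subspace `D = {(a,…,a)} ⊂ ℝ^{2N}`. -/
def Dset (N : ℕ) : Set (Ph N) := {z | ∃ a : V2, z = diagPh N a}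

/-- The matrix `J = [[0,1],[−1,0]]` (rotation by `−π/2`). -/
def Jmat : Matrix (Fin 2) (Fin 2) ℝ := !![0, 1; -1, 0]

/-- `J` as a linear map on `ℝ²`. -/
def J2 : V2 →L[ℝ] V2 :=
  LinearMap.toContinuousLinearMap (Matrix.toEuclideanLin Jmat)

/-- The block diagonal matrix `J_N = diag(J,…,J)`. -/
def JNmat (N : ℕ) : Matrix (Fin N × Fin 2) (Fin N × Fin 2) ℝ :=
  fun p q => if p.1 = q.1 then Jmat p.2 q.2 else 0

/-- `J_N` as a linear map on `ℝ^{2N}`. -/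
def JN (N : ℕ) : Ph N →L[ℝ] Ph N :=
  LinearMap.toContinuousLinearMap (Matrix.toEuclideanLin (JNmat N))

/-- `M_Γ = diag(Γ₁,Γ₁,…,Γ_N,Γ_N)` as a linear map on `ℝ^{2N}`. -/
def MG (N : ℕ) (Γv : Fin N → ℝ) : Ph N →L[ℝ] Ph N :=
  LinearMap.toContinuousLinearMap
    (Matrix.toEuclideanLin (Matrix.diagonal fun p : Fin N × Fin 2 => Γv p.1))

/-- `M_Γ⁻¹` as a linear map on `ℝ^{2N}`. -/
def MGinv (N : ℕ) (Γv : Fin N → ℝ) : Ph N →L[ℝ] Ph N :=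
  LinearMap.toContinuousLinearMap
    (Matrix.toEuclideanLin (Matrix.diagonal fun p : Fin N × Fin 2 => (Γv p.1)⁻¹))

/-- Total vorticity `Γ = Σ Γ_j`. -/
def Gtot (N : ℕ) (Γv : Fin N → ℝ) : ℝ := ∑ j, Γv j

/-- Total vortex angular momentum `L = Σ_{j<k} Γ_jΓ_k`. -/
def Lmom (N : ℕ) (Γv : Fin N → ℝ) : ℝ :=
  ∑ j : Fin N, ∑ k : Fin N, if j < k then Γv j * Γv k else 0

/-- The whole-plane Hamiltonian `H₀`. -/
def H0 (N : ℕ) (Γv : Fin N → ℝ) (z : Ph N) : ℝ :=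
  -(1 / (2 * π)) * ∑ j : Fin N, ∑ k : Fin N,
    if j ≠ k then Γv j * Γv k * Real.log ‖comp2 z j - comp2 z k‖ else 0

/-- The Hessian of a function, as a continuous linear map. -/
def hessOf {E : Type*} [NormedAddCommGroup E] [InnerProductSpace ℝ E] [CompleteSpace E]
    (f : E → ℝ) (x : E) : E →L[ℝ] E :=
  fderiv ℝ (gradient f) x

/-- The vector field `M_Γ⁻¹ J_N ∇H` of the Hamiltonian system `M_Γ ż = J_N ∇H(z)`. -/
def vf (N : ℕ) (Γv : Fin N → ℝ) (H : Ph N → ℝ) (z : Ph N) : Ph N :=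
  MGinv N Γv (JN N (gradient H z))

/-- The linearization `A(t) = M_Γ⁻¹ J_N ∇²H(z)` of the vector field along `z`. -/
def linA (N : ℕ) (Γv : Fin N → ℝ) (H : Ph N → ℝ) (z : Ph N) : Ph N →L[ℝ] Ph N :=
  (MGinv N Γv) ∘L (JN N) ∘L (hessOf H z)

/-- `exp(−νt J_N)`. -/
def expJN (N : ℕ) (ν t : ℝ) : Ph N →L[ℝ] Ph N :=
  NormedSpace.exp ((-(ν * t)) • JN N)

/-- The rigidly rotating configuration `Z(t) = exp(−νt J_N) z₀`. -/
def Zrel (N : ℕ) (ν : ℝ) (z0 : Ph N) (t : ℝ) : Ph N := expJN N ν t z0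

/-- The matrix of an endomorphism of `ℝ^{2N}` in the standard basis. -/
def matOf {N : ℕ} (T : Ph N →L[ℝ] Ph N) : Matrix (Fin N × Fin 2) (Fin N × Fin 2) ℝ :=
  Matrix.toEuclideanLin.symm T.toLinearMap

/-- The characteristic polynomial over `ℂ` of a real endomorphism of `ℝ^{2N}`;
its roots are the complex eigenvalues. -/
def cpC {N : ℕ} (T : Ph N →L[ℝ] Ph N) : Polynomial ℂ :=
  ((matOf T).charpoly).map (algebraMap ℝ ℂ)

/-- The interaction energy `F(z) = Σ_{j,k} Γ_jΓ_k g(z_j,z_k)`. -/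
def Fint (N : ℕ) (Γv : Fin N → ℝ) (g : V2 → V2 → ℝ) (z : Ph N) : ℝ :=
  ∑ j : Fin N, ∑ k : Fin N, Γv j * Γv k * g (comp2 z j) (comp2 z k)

/-- The rescaled Hamiltonian `H_r(u) = H₀(u) − F(ru) + F(0)`. -/
def Hr (N : ℕ) (Γv : Fin N → ℝ) (g : V2 → V2 → ℝ) (r : ℝ) (u : Ph N) : ℝ :=
  H0 N Γv u - Fint N Γv g (r • u) + Fint N Γv g 0


/-- The `N`-vortex Hamiltonian on a domain `Ω` with Green's-function regular part `g`. -/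
def HOm (N : ℕ) (Γv : Fin N → ℝ) (g : V2 → V2 → ℝ) (z : Ph N) : ℝ :=
  (∑ j : Fin N, ∑ k : Fin N,
    if j ≠ k then
      Γv j * Γv k *
        (-(1 / (2 * π)) * Real.log ‖comp2 z j - comp2 z k‖ - g (comp2 z j) (comp2 z k))
    else 0)
  - ∑ j : Fin N, (Γv j) ^ 2 * g (comp2 z j) (comp2 z j)


/-!
`H₀` is invariant under the diagonal translations `z ↦ z + s â` and satisfies
`H₀(cz) = H₀(z) + C log c` on `F_N(ℝ²)`; differentiating `∇H₀` along these families gives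
`∇²H₀(z) â = 0` and Euler's identity `∇²H₀(z) z = -∇H₀(z)`. Along the solution `Z`, the chain
rule applied to `Ż = M_Γ⁻¹J_N∇H₀(Z)` shows that `Ż` solves the linearized equation
`v̇ = A(t) v`, and Euler's identity says `A(t) Z = -Ż`, which is exactly what makes `Z - 2tŻ` a
solution. Since `J` is skew, the rotation preserves every `|z_j - z_k|`, so `Z` stays in
`F_N(ℝ²)`, where `H₀` is smooth and `A` is continuous. Hence solutions of the linear equation are
determined by their value at `0`, i.e. `X₀(t) v(0) = v(t)`, and `J_N Z = -Ż / ν`.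
-/

section Hessian

variable {E : Type*} [NormedAddCommGroup E] [InnerProductSpace ℝ E] [CompleteSpace E]
  {H : E → ℝ}

lemma gradient_add_eq_of_forall_add_eq {v : E} (h : ∀ w, H (w + v) = H w) (z : E) :
    gradient H (z + v) = gradient H z := by
  have hfd : fderiv ℝ H (z + v) = fderiv ℝ H z := by
    rw [← fderiv_comp_add_right]
    simp only [h]
  simp only [gradient, hfd]

lemma hessOf_apply_eq_zero_of_forall_add_smul_eq {v : E} (h : ∀ (s : ℝ) w, H (w + s • v) = H w)
    {z : E} (hz : DifferentiableAt ℝ (gradient H) z) : hessOf H z v = 0 := by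
  have hline : HasDerivAt (fun s : ℝ => gradient H (z + s • v)) (hessOf H z v) 0 := by
    have hpath : HasDerivAt (fun s : ℝ => z + s • v) v 0 :=
      ((hasDerivAt_id (0 : ℝ)).smul_const v).const_add z |>.congr_deriv (one_smul ℝ v)
    exact hz.hasFDerivAt.comp_hasDerivAt_of_eq 0 hpath (by simp)
  have hconst : (fun s : ℝ => gradient H (z + s • v)) = fun _ => gradient H z :=
    funext fun s => gradient_add_eq_of_forall_add_eq (h s) z
  rw [hconst] at hline
  exact hline.unique (hasDerivAt_const 0 _)

lemma gradient_smul_of_eqOn_add_const {U : Set E} (hU : IsOpen U) {c k : ℝ} (hc : c ≠ 0)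
    (hH : ∀ w ∈ U, H (c • w) = H w + k) {z : E} (hz : z ∈ U) :
    gradient H (c • z) = c⁻¹ • gradient H z := by
  have hloc : (fun w => H (c • w)) =ᶠ[𝓝 z] fun w => H w + k :=
    Filter.eventuallyEq_of_mem (hU.mem_nhds hz) hH
  have hfd : c • fderiv ℝ H (c • z) = fderiv ℝ H z := by
    rw [← fderiv_comp_smul, hloc.fderiv_eq, fderiv_add_const]
  have hfd' : fderiv ℝ H (c • z) = c⁻¹ • fderiv ℝ H z := by
    rw [← hfd, smul_smul, inv_mul_cancel₀ hc, one_smul]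
  simp only [gradient, hfd', map_smul]

lemma hessOf_apply_self_of_smul_eq_add {U : Set E} (hU : IsOpen U) {k : ℝ → ℝ}
    (hH : ∀ c > 0, ∀ w ∈ U, H (c • w) = H w + k c) {z : E} (hz : z ∈ U)
    (hg : DifferentiableAt ℝ (gradient H) z) : hessOf H z z = -gradient H z := by
  have hray : HasDerivAt (fun s : ℝ => gradient H (s • z)) (hessOf H z z) 1 := by
    have hpath : HasDerivAt (fun s : ℝ => s • z) z 1 :=
      ((hasDerivAt_id (1 : ℝ)).smul_const z).congr_deriv (one_smul ℝ z)
    exact hg.hasFDerivAt.comp_hasDerivAt_of_eq 1 hpath (one_smul ℝ z).symm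
  have hscale : (fun s : ℝ => gradient H (s • z)) =ᶠ[𝓝 1] fun s => s⁻¹ • gradient H z := by
    filter_upwards [Ioi_mem_nhds one_pos] with s hs
    exact gradient_smul_of_eqOn_add_const hU hs.ne' (hH s hs) hz
  have hinv : HasDerivAt (fun s : ℝ => s⁻¹ • gradient H z) (-gradient H z) 1 := by
    simpa using (hasDerivAt_inv (one_ne_zero' ℝ)).smul_const (gradient H z)
  exact hray.unique (hinv.congr_of_eventuallyEq hscale)

lemma contDiffOn_gradient {U : Set E} (hU : IsOpen U) {n : WithTop ℕ∞}
    (hH : ContDiffOn ℝ (n + 1) H U) : ContDiffOn ℝ n (gradient H) U :=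
  (InnerProductSpace.toDual ℝ E).symm.contDiff.comp_contDiffOn (hH.fderiv_of_isOpen hU le_rfl)

end Hessian

section LinearODE

variable {E : Type*} [NormedAddCommGroup E] [NormedSpace ℝ E] {A : ℝ → E →L[ℝ] E}

theorem ODE_solution_unique_of_linear (hA : Continuous A) {f g : ℝ → E}
    (hf : ∀ t, HasDerivAt f (A t (f t)) t) (hg : ∀ t, HasDerivAt g (A t (g t)) t) {t₀ : ℝ}
    (h₀ : f t₀ = g t₀) : f = g := by
  ext t
  obtain ⟨a, b, ht, ht₀⟩ : ∃ a b, t ∈ Ioo a b ∧ t₀ ∈ Ioo a b := by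
    use min (-|t|) (-|t₀|) - 1, max |t| |t₀| + 1
    grind
  obtain ⟨C, hC⟩ := isCompact_Icc.exists_bound_of_continuousOn (hA.continuousOn (s := Icc a b))
  have hlip : ∀ s ∈ Ioo a b, LipschitzOnWith C.toNNReal (A s) univ := by
    intro s hs
    refine ((A s).lipschitz.weaken ?_).lipschitzOnWith
    rw [← NNReal.coe_le_coe, Real.coe_toNNReal', coe_nnnorm]
    exact (hC s (Ioo_subset_Icc_self hs)).trans (le_max_left C 0)
  exact ODE_solution_unique_of_mem_Ioo hlip ht₀ (fun s _ => ⟨hf s, mem_univ _⟩)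
    (fun s _ => ⟨hg s, mem_univ _⟩) h₀ ht

theorem apply_eq_of_fundamental_solution (hA : Continuous A) {X : ℝ → E →L[ℝ] E}
    (hX₀ : X 0 = 1) (hX : ∀ t, HasDerivAt X (A t ∘L X t) t) {g : ℝ → E}
    (hg : ∀ t, HasDerivAt g (A t (g t)) t) (t : ℝ) : X t (g 0) = g t := by
  refine congrFun (ODE_solution_unique_of_linear (f := fun s => X s (g 0)) hA (fun s => ?_) hg
    (t₀ := 0) ?_) t
  · simpa using (hX s).clm_apply (hasDerivAt_const s (g 0))
  · simp [hX₀]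

end LinearODE

lemma norm_eq_of_hasDerivAt_skew {E : Type*} [NormedAddCommGroup E] [InnerProductSpace ℝ E]
    {A : E →L[ℝ] E} (hA : ∀ w, ⟪A w, w⟫ = 0) {f : ℝ → E} (hf : ∀ t, HasDerivAt f (A (f t)) t)
    (t : ℝ) : ‖f t‖ = ‖f 0‖ := by
  have hsq : ∀ s, HasDerivAt (fun s => ‖f s‖ ^ 2) 0 s := fun s => by
    simpa [real_inner_comm (A (f s)), hA] using (hf s).norm_sq
  have := is_const_of_deriv_eq_zero (fun s => (hsq s).differentiableAt) (fun s => (hsq s).deriv) t 0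
  simpa using this

section Vortex

variable {N : ℕ}

def compDiff (N : ℕ) (j k : Fin N) : Ph N →L[ℝ] V2 :=
  LinearMap.toContinuousLinearMap
    { toFun := fun z => comp2 z j - comp2 z k
      map_add' := fun z w => by
        ext i
        simp only [comp2, mkV2, PiLp.add_apply, PiLp.sub_apply]
        ring
      map_smul' := fun c z => by
        ext i
        simp only [comp2, mkV2, PiLp.smul_apply, PiLp.sub_apply, smul_eq_mul, RingHom.id_apply]
        ring }

lemma compDiff_apply (j k : Fin N) (z : Ph N) :
    compDiff N j k z = comp2 z j - comp2 z k := rfl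

lemma mem_FNset_iff {z : Ph N} : z ∈ FNset N ↔ ∀ j k, j ≠ k → compDiff N j k z ≠ 0 := by
  simp only [FNset, Set.mem_ofPred_eq, compDiff_apply, sub_ne_zero]

lemma isOpen_FNset : IsOpen (FNset N) := by
  have hFN : FNset N = ⋂ (j) (k) (_ : j ≠ k), compDiff N j k ⁻¹' {0}ᶜ := by
    ext z
    simp [mem_FNset_iff]
  rw [hFN]
  exact isOpen_iInter_of_finite fun j => isOpen_iInter_of_finite fun k =>
    isOpen_iInter_of_finite fun _ => isOpen_compl_singleton.preimage (compDiff N j k).continuous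

lemma compDiff_JN (j k : Fin N) (z : Ph N) : compDiff N j k (JN N z) = J2 (compDiff N j k z) := by
  ext i
  fin_cases i <;> simp [compDiff_apply, JN, J2, JNmat, Jmat, comp2, mkV2, Matrix.mulVec,
    dotProduct, Fintype.sum_prod_type, Fin.sum_univ_two]

lemma inner_J2_self (w : V2) : ⟪J2 w, w⟫ = 0 := by
  simp [J2, Jmat, PiLp.inner_apply, dotProduct, Fin.sum_univ_two]
  ring

lemma compDiff_diagPh (j k : Fin N) (a : V2) : compDiff N j k (diagPh N a) = 0 :=
  sub_eq_zero.2 rfl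

variable {Γv : Fin N → ℝ}

lemma H0_eq_sum_compDiff (z : Ph N) : H0 N Γv z = -(1 / (2 * π)) * ∑ j : Fin N, ∑ k : Fin N,
    if j ≠ k then Γv j * Γv k * Real.log ‖compDiff N j k z‖ else 0 := rfl

lemma contDiffOn_H0 : ContDiffOn ℝ 2 (H0 N Γv) (FNset N) := by
  simp only [funext H0_eq_sum_compDiff]
  refine contDiffOn_const.mul (ContDiffOn.sum fun j _ => ContDiffOn.sum fun k _ => ?_)
  by_cases hjk : j = k
  · simpa [hjk] using contDiffOn_const
  · have hne : ∀ z ∈ FNset N, compDiff N j k z ≠ 0 := fun z hz => mem_FNset_iff.1 hz j k hjk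
    simpa [hjk] using contDiffOn_const.mul (((compDiff N j k).contDiff.contDiffOn.norm ℝ hne).log
      fun z hz => norm_ne_zero_iff.2 (hne z hz))

lemma differentiableAt_gradient_H0 {z : Ph N} (hz : z ∈ FNset N) :
    DifferentiableAt ℝ (gradient (H0 N Γv)) z :=
  ((contDiffOn_gradient (n := 1) isOpen_FNset contDiffOn_H0).contDiffAt
    (isOpen_FNset.mem_nhds hz)).differentiableAt one_ne_zero

lemma continuousOn_hessOf_H0 : ContinuousOn (hessOf (H0 N Γv)) (FNset N) :=
  (contDiffOn_gradient (n := 1) isOpen_FNset contDiffOn_H0).continuousOn_fderiv_of_isOpen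
    isOpen_FNset le_rfl

lemma H0_add_smul_diagPh (z : Ph N) (s : ℝ) (a : V2) :
    H0 N Γv (z + s • diagPh N a) = H0 N Γv z := by
  simp only [H0_eq_sum_compDiff, map_add, map_smul, compDiff_diagPh, smul_zero, add_zero]

lemma hessOf_H0_diagPh {z : Ph N} (hz : z ∈ FNset N) (a : V2) :
    hessOf (H0 N Γv) z (diagPh N a) = 0 :=
  hessOf_apply_eq_zero_of_forall_add_smul_eq (fun s w => H0_add_smul_diagPh w s a)
    (differentiableAt_gradient_H0 hz)

lemma H0_smul {c : ℝ} (hc : 0 < c) {z : Ph N} (hz : z ∈ FNset N) :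
    H0 N Γv (c • z) = H0 N Γv z +
      -(1 / (2 * π)) * (∑ j : Fin N, ∑ k : Fin N, if j ≠ k then Γv j * Γv k else 0) * log c := by
  have hterm : ∀ j k : Fin N,
      (if j ≠ k then Γv j * Γv k * log ‖compDiff N j k (c • z)‖ else 0) =
        (if j ≠ k then Γv j * Γv k * log ‖compDiff N j k z‖ else 0) +
          (if j ≠ k then Γv j * Γv k else 0) * log c := by
    intro j k
    by_cases hjk : j = k
    · simp [hjk]
    · have hne := norm_ne_zero_iff.2 (mem_FNset_iff.1 hz j k hjk)
      simp only [hjk, ne_eq, not_false_eq_true, if_true, map_smul, norm_smul, norm_of_nonneg hc.le,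
        log_mul hc.ne' hne]
      ring
  simp only [H0_eq_sum_compDiff, hterm, Finset.sum_add_distrib, ← Finset.sum_mul]
  ring

lemma hessOf_H0_self {z : Ph N} (hz : z ∈ FNset N) :
    hessOf (H0 N Γv) z z = -gradient (H0 N Γv) z :=
  hessOf_apply_self_of_smul_eq_add isOpen_FNset (fun _ hc _ hw => H0_smul hc hw) hz
    (differentiableAt_gradient_H0 hz)

lemma linA_apply (H : Ph N → ℝ) (z v : Ph N) :
    linA N Γv H z v = MGinv N Γv (JN N (hessOf H z v)) := rfl

lemma linA_H0_diagPh {z : Ph N} (hz : z ∈ FNset N) (a : V2) :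
    linA N Γv (H0 N Γv) z (diagPh N a) = 0 := by
  rw [linA_apply, hessOf_H0_diagPh hz, map_zero, map_zero]

lemma hasFDerivAt_vf {H : Ph N → ℝ} {z : Ph N} (hz : DifferentiableAt ℝ (gradient H) z) :
    HasFDerivAt (vf N Γv H) (linA N Γv H z) z :=
  (MGinv N Γv ∘L JN N).hasFDerivAt.comp z hz.hasFDerivAt

lemma continuousOn_linA {H : Ph N → ℝ} {U : Set (Ph N)} (hH : ContinuousOn (hessOf H) U) :
    ContinuousOn (linA N Γv H) U :=
  continuousOn_const.clm_comp (continuousOn_const.clm_comp hH)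

end Vortex

section RelativeEquilibrium

variable {N : ℕ} {Γv : Fin N → ℝ} {ν : ℝ} {z0 : Ph N}

lemma expJN_eq_exp_smul (ν t : ℝ) : expJN N ν t = NormedSpace.exp (t • ((-ν) • JN N)) := by
  rw [expJN, smul_smul, mul_neg, mul_comm]

lemma Zrel_zero : Zrel N ν z0 0 = z0 := by
  simp [Zrel, expJN, zero_smul ℝ (JN N)]

lemma expJN_JN (t : ℝ) (z : Ph N) : expJN N ν t (JN N z) = JN N (expJN N ν t z) := by
  have hcomm : Commute (JN N) ((-(ν * t)) • JN N) := by
    ext1 w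
    simp
  exact congrArg (· z) hcomm.exp_right.eq.symm

lemma hasDerivAt_Zrel (ν : ℝ) (z0 : Ph N) (t : ℝ) :
    HasDerivAt (Zrel N ν z0) ((-ν) • JN N (Zrel N ν z0 t)) t := by
  have hZ : Zrel N ν z0 = fun u => NormedSpace.exp (u • ((-ν) • JN N)) z0 :=
    funext fun u => by rw [Zrel, expJN_eq_exp_smul]
  rw [hZ]
  simpa using (hasDerivAt_exp_smul_const' (𝕂 := ℝ) ((-ν) • JN N) t).clm_apply
    (hasDerivAt_const t z0)

lemma Zrel_mem_FNset (hz0 : z0 ∈ FNset N) (t : ℝ) : Zrel N ν z0 t ∈ FNset N := by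
  rw [mem_FNset_iff] at hz0 ⊢
  intro j k hjk
  have hrot : ∀ s, HasDerivAt (fun s => compDiff N j k (Zrel N ν z0 s))
      (((-ν) • J2) (compDiff N j k (Zrel N ν z0 s))) s := fun s => by
    simpa only [Function.comp_def, map_smul, compDiff_JN, smul_apply] using
      (compDiff N j k).hasFDerivAt.comp_hasDerivAt s (hasDerivAt_Zrel ν z0 s)
  have hskew : ∀ w, ⟪((-ν) • J2) w, w⟫ = 0 := fun w => by
    simp [real_inner_smul_left, inner_J2_self]
  rw [← norm_ne_zero_iff, norm_eq_of_hasDerivAt_skew hskew hrot t, Zrel_zero, norm_ne_zero_iff]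
  exact hz0 j k hjk

lemma continuous_linA_Zrel (hz0 : z0 ∈ FNset N) :
    Continuous fun t => linA N Γv (H0 N Γv) (Zrel N ν z0 t) :=
  continuousOn_linA continuousOn_hessOf_H0 |>.comp_continuous
    (continuous_iff_continuousAt.2 fun t => (hasDerivAt_Zrel ν z0 t).continuousAt)
    (Zrel_mem_FNset hz0)

lemma hasDerivAt_velocity_Zrel (hz0 : z0 ∈ FNset N)
    (hsol : ∀ t, HasDerivAt (Zrel N ν z0) (vf N Γv (H0 N Γv) (Zrel N ν z0 t)) t) (t : ℝ) :
    HasDerivAt (fun s => (-ν) • JN N (Zrel N ν z0 s))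
      (linA N Γv (H0 N Γv) (Zrel N ν z0 t) ((-ν) • JN N (Zrel N ν z0 t))) t := by
  have hvf : ∀ s, vf N Γv (H0 N Γv) (Zrel N ν z0 s) = (-ν) • JN N (Zrel N ν z0 s) :=
    fun s => (hsol s).unique (hasDerivAt_Zrel ν z0 s)
  have hlin : HasFDerivAt (vf N Γv (H0 N Γv)) (linA N Γv (H0 N Γv) (Zrel N ν z0 t))
      (Zrel N ν z0 t) :=
    hasFDerivAt_vf (differentiableAt_gradient_H0 (Zrel_mem_FNset hz0 t))
  simpa only [Function.comp_def, hvf] using hlin.comp_hasDerivAt t (hsol t)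

lemma linA_Zrel_self (hz0 : z0 ∈ FNset N)
    (hsol : ∀ t, HasDerivAt (Zrel N ν z0) (vf N Γv (H0 N Γv) (Zrel N ν z0 t)) t) (t : ℝ) :
    linA N Γv (H0 N Γv) (Zrel N ν z0 t) (Zrel N ν z0 t) = -((-ν) • JN N (Zrel N ν z0 t)) := by
  rw [linA_apply, hessOf_H0_self (Zrel_mem_FNset hz0 t), map_neg, map_neg]
  exact congrArg Neg.neg ((hsol t).unique (hasDerivAt_Zrel ν z0 t))

lemma hasDerivAt_Zrel_sub_velocity (hz0 : z0 ∈ FNset N)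
    (hsol : ∀ t, HasDerivAt (Zrel N ν z0) (vf N Γv (H0 N Γv) (Zrel N ν z0 t)) t) (t : ℝ) :
    HasDerivAt (fun s => Zrel N ν z0 s - (2 * s) • ((-ν) • JN N (Zrel N ν z0 s)))
      (linA N Γv (H0 N Γv) (Zrel N ν z0 t)
        (Zrel N ν z0 t - (2 * t) • ((-ν) • JN N (Zrel N ν z0 t)))) t := by
  have h2s : HasDerivAt (fun s : ℝ => 2 * s) 2 t := by
    simpa using (hasDerivAt_id t).const_mul (2 : ℝ)
  refine ((hasDerivAt_Zrel ν z0 t).sub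
    (h2s.smul (hasDerivAt_velocity_Zrel hz0 hsol t))).congr_deriv ?_
  simp only [map_sub, map_smul, linA_Zrel_self hz0 hsol]
  module

lemma hasDerivAt_JN_Zrel (hν : ν ≠ 0) (hz0 : z0 ∈ FNset N)
    (hsol : ∀ t, HasDerivAt (Zrel N ν z0) (vf N Γv (H0 N Γv) (Zrel N ν z0 t)) t) (t : ℝ) :
    HasDerivAt (fun s => JN N (Zrel N ν z0 s))
      (linA N Γv (H0 N Γv) (Zrel N ν z0 t) (JN N (Zrel N ν z0 t))) t := by
  have hν' : -ν ≠ 0 := neg_ne_zero.2 hν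
  have h := (hasDerivAt_velocity_Zrel hz0 hsol t).const_smul (-ν)⁻¹
  rw [← map_smul, inv_smul_smul₀ hν'] at h
  exact h.congr_of_eventuallyEq (.of_forall fun s => (inv_smul_smul₀ hν' _).symm)

end RelativeEquilibrium

theorem floquet_solutions_relative_equilibrium_general (N : ℕ)
    (Γv : Fin N → ℝ) (ν : ℝ) (hν : ν = 1 ∨ ν = -1)
    (z0 : Ph N) (hz0 : z0 ∈ FNset N)
    (hsol : ∀ t : ℝ, HasDerivAt (Zrel N ν z0) (vf N Γv (H0 N Γv) (Zrel N ν z0 t)) t) :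
    (∀ (a : V2) (t : ℝ), HasDerivAt (fun _ : ℝ => diagPh N a)
        (linA N Γv (H0 N Γv) (Zrel N ν z0 t) (diagPh N a)) t) ∧
    (∀ t : ℝ, HasDerivAt (fun s : ℝ => (-ν) • JN N (Zrel N ν z0 s))
        (linA N Γv (H0 N Γv) (Zrel N ν z0 t) ((-ν) • JN N (Zrel N ν z0 t))) t) ∧
    (∀ t : ℝ, HasDerivAt
        (fun s : ℝ => Zrel N ν z0 s - (2 * s) • ((-ν) • JN N (Zrel N ν z0 s)))
        (linA N Γv (H0 N Γv) (Zrel N ν z0 t)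
          (Zrel N ν z0 t - (2 * t) • ((-ν) • JN N (Zrel N ν z0 t)))) t) ∧
    (∀ X : ℝ → Ph N →L[ℝ] Ph N, X 0 = 1 →
      (∀ t : ℝ, HasDerivAt X (linA N Γv (H0 N Γv) (Zrel N ν z0 t) ∘L X t) t) →
      ∀ t : ℝ,
        (∀ a : V2, X t (diagPh N a) = diagPh N a) ∧
        X t (JN N z0) = expJN N ν t (JN N z0) ∧
        X t z0 = expJN N ν t (z0 + (2 * t * ν) • JN N z0)) := by
  have hν0 : ν ≠ 0 := by rcases hν with rfl | rfl <;> norm_num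
  have hA := continuous_linA_Zrel (ν := ν) (Γv := Γv) hz0
  have hdiag : ∀ (a : V2) (t : ℝ), HasDerivAt (fun _ : ℝ => diagPh N a)
      (linA N Γv (H0 N Γv) (Zrel N ν z0 t) (diagPh N a)) t := fun a t => by
    rw [linA_H0_diagPh (Zrel_mem_FNset hz0 t)]
    exact hasDerivAt_const t _
  refine ⟨hdiag, hasDerivAt_velocity_Zrel hz0 hsol, hasDerivAt_Zrel_sub_velocity hz0 hsol,
    fun X hX0 hX t => ⟨fun a => apply_eq_of_fundamental_solution hA hX0 hX (hdiag a) t, ?_, ?_⟩⟩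
  · have h := apply_eq_of_fundamental_solution hA hX0 hX (hasDerivAt_JN_Zrel hν0 hz0 hsol) t
    rwa [Zrel_zero, Zrel, ← expJN_JN] at h
  · have h := apply_eq_of_fundamental_solution hA hX0 hX (hasDerivAt_Zrel_sub_velocity hz0 hsol) t
    rw [Zrel_zero, mul_zero, zero_smul, sub_zero] at h
    rw [h, map_add, map_smul, expJN_JN, Zrel]
    module

/-- Floquet solutions of the linearization along a relative equilibrium `Z(t)`:
the constants `â ∈ D`, `Ż(t) = −νJ_N Z(t)` and `Z(t) − 2tŻ(t)` solve
`v̇ = M_Γ⁻¹J_N∇²H₀(Z(t))v`; consequently the fundamental solution `X₀` satisfies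
`X₀(t)â = â`, `X₀(t)J_Nz₀ = exp(−νtJ_N)J_Nz₀` and
`X₀(t)z₀ = exp(−νtJ_N)(z₀ + 2tν J_Nz₀)`. -/
theorem floquet_solutions_relative_equilibrium (N : ℕ) (hN : 2 ≤ N)
    (Γv : Fin N → ℝ) (hΓ : ∀ j, Γv j ≠ 0) (ν : ℝ) (hν : ν = 1 ∨ ν = -1)
    (z0 : Ph N) (hz0 : z0 ∈ FNset N)
    (hsol : ∀ t : ℝ, HasDerivAt (Zrel N ν z0) (vf N Γv (H0 N Γv) (Zrel N ν z0 t)) t) :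
    (∀ (a : V2) (t : ℝ), HasDerivAt (fun _ : ℝ => diagPh N a)
        (linA N Γv (H0 N Γv) (Zrel N ν z0 t) (diagPh N a)) t) ∧
    (∀ t : ℝ, HasDerivAt (fun s : ℝ => (-ν) • JN N (Zrel N ν z0 s))
        (linA N Γv (H0 N Γv) (Zrel N ν z0 t) ((-ν) • JN N (Zrel N ν z0 t))) t) ∧
    (∀ t : ℝ, HasDerivAt
        (fun s : ℝ => Zrel N ν z0 s - (2 * s) • ((-ν) • JN N (Zrel N ν z0 s)))
        (linA N Γv (H0 N Γv) (Zrel N ν z0 t)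
          (Zrel N ν z0 t - (2 * t) • ((-ν) • JN N (Zrel N ν z0 t)))) t) ∧
    (∀ X : ℝ → Ph N →L[ℝ] Ph N, X 0 = 1 →
      (∀ t : ℝ, HasDerivAt X (linA N Γv (H0 N Γv) (Zrel N ν z0 t) ∘L X t) t) →
      ∀ t : ℝ,
        (∀ a : V2, X t (diagPh N a) = diagPh N a) ∧
        X t (JN N z0) = expJN N ν t (JN N z0) ∧
        X t z0 = expJN N ν t (z0 + (2 * t * ν) • JN N z0)) :=
  floquet_solutions_relative_equilibrium_general N Γv ν hν z0 hz0 hsol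

end
end

section
/- Let Ω ⊂ ℝ² be open, g ∈ C²(Ω×Ω) with g(x,y) = g(y,x), F : Ω^N → ℝ, F(z) = Σ_{j,k=1}^N Γ_jΓ_k g(z_j,z_k), and h(x) = g(x,x). Then for every a ∈ Ω and every b ∈ ℝ², the Hessian of F at â = (a,…,a) applied to b̂ = (b,…,b) satisfies ∇²F(â)·b̂ = Γ M_Γ (∇²h(a)b, …, ∇²h(a)b); i.e. for every w ∈ ℝ^{2N}, D²F(â)[b̂,w] = Γ Σ_{j=1}^N Γ_j ⟨∇²h(a)b, w_j⟩. -/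
/-!
`F` is a weighted sum of `G(p) = g p.1 p.2` composed with the linear maps `z ↦ (z_j, z_k)`, and
`h` is `G` composed with the diagonal `x ↦ (x, x)`; so both second derivatives are `D²G(a,a)`
evaluated on pulled-back vectors. The linear form `φ = D²G(a,a)[(b,b), ·]` splits as
`φ(x,y) = φ(x,0) + φ(0,y)`, which collapses `Σ_{j,k} Γ_jΓ_k φ(w_j,w_k)` to
`Γ Σ_j Γ_j φ(w_j,w_j) = Γ Σ_j Γ_j D²h(a)[b,w_j]`.
-/

noncomputable section

open Real Set Asymptotics Polynomial Function
open scoped Topology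
open scoped BigOperators RealInnerProductSpace

section Hessian

variable {E : Type*} [NormedAddCommGroup E] [InnerProductSpace ℝ E] [CompleteSpace E]

theorem inner_hessOf_apply (f : E → ℝ) (x v w : E) :
    ⟪hessOf f x v, w⟫ = fderiv ℝ (fderiv ℝ f) x v w := by
  have hgrad : gradient f = (InnerProductSpace.toDual ℝ E).symm ∘ fderiv ℝ f := rfl
  rw [hessOf, hgrad, LinearIsometryEquiv.comp_fderiv]
  exact InnerProductSpace.toDual_symm_apply

end Hessian

section CompLinear

variable {E F G : Type*} [NormedAddCommGroup E] [NormedSpace ℝ E] [NormedAddCommGroup F]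
  [NormedSpace ℝ F] [NormedAddCommGroup G] [NormedSpace ℝ G]

theorem fderiv_fderiv_comp_continuousLinearMap {f : F → G} {s : Set F} (hs : IsOpen s)
    (hf : ContDiffOn ℝ 2 f s) (L : E →L[ℝ] F) {x : E} (hx : L x ∈ s) (v w : E) :
    fderiv ℝ (fderiv ℝ (f ∘ L)) x v w = fderiv ℝ (fderiv ℝ f) (L x) (L v) (L w) := by
  have hs' : IsOpen (L ⁻¹' s) := hs.preimage L.continuous
  have h := L.iteratedFDerivWithin_comp_right hf hs.uniqueDiffOn hs'.uniqueDiffOn hx le_rfl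
  rw [iteratedFDerivWithin_of_isOpen 2 hs' hx, iteratedFDerivWithin_of_isOpen 2 hs hx] at h
  simpa [iteratedFDeriv_two_apply] using congr($h ![v, w])

end CompLinear

theorem sum_sum_mul_apply_pair {ι R M : Type*} [Fintype ι] [CommRing R] [AddCommGroup M]
    [Module R M] (φ : M × M →ₗ[R] R) (c : ι → R) (w : ι → M) :
    ∑ j, ∑ k, c j * c k * φ (w j, w k) = (∑ j, c j) * ∑ j, c j * φ (w j, w j) := by
  have hsplit : ∀ x y : M, φ (x, y) = φ (x, 0) + φ (0, y) := fun x y => by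
    rw [← map_add, Prod.mk_add_mk, add_zero, zero_add]
  calc ∑ j, ∑ k, c j * c k * φ (w j, w k)
      = ∑ j, ∑ k, (c k * (c j * φ (w j, 0)) + c j * (c k * φ (0, w k))) :=
        Finset.sum_congr rfl fun j _ => Finset.sum_congr rfl fun k _ => by rw [hsplit]; ring
    _ = (∑ j, c j) * ∑ j, c j * (φ (w j, 0) + φ (0, w j)) := by
        simp only [Finset.sum_add_distrib, ← Finset.sum_mul, ← Finset.mul_sum, mul_add]
    _ = (∑ j, c j) * ∑ j, c j * φ (w j, w j) := by simp only [← hsplit]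

section PointVortex

variable {N : ℕ}

def comp2L (j : Fin N) : Ph N →L[ℝ] V2 :=
  LinearMap.toContinuousLinearMap
    { toFun := fun z => comp2 z j
      map_add' := fun _ _ => rfl
      map_smul' := fun _ _ => rfl }

@[simp]
theorem comp2_diagPh (a : V2) (j : Fin N) : comp2 (diagPh N a) j = a := rfl

theorem inner_mkPh_mul (c : Fin N → ℝ) (u : V2) (w : Ph N) :
    ⟪mkPh fun p => c p.1 * u p.2, w⟫ = ∑ j, c j * ⟪u, comp2 w j⟫ := by
  simp only [mkPh, comp2, mkV2, PiLp.inner_apply, RCLike.inner_apply, ringHom_apply,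
    Fintype.sum_prod_type, Fin.sum_univ_two]
  exact Finset.sum_congr rfl fun j _ => by ring

def pairProj (j k : Fin N) : Ph N →L[ℝ] V2 × V2 := (comp2L j).prod (comp2L k)

variable {Γv : Fin N → ℝ} {Ω : Set V2} {g : V2 → V2 → ℝ}

theorem fderiv_fderiv_Fint_apply (hΩ : IsOpen Ω)
    (hg : ContDiffOn ℝ 2 (fun p : V2 × V2 => g p.1 p.2) (Ω ×ˢ Ω)) {z : Ph N}
    (hz : ∀ j, comp2 z j ∈ Ω) (v w : Ph N) :
    fderiv ℝ (fderiv ℝ (Fint N Γv g)) z v w =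
      ∑ j, ∑ k, Γv j * Γv k * fderiv ℝ (fderiv ℝ (fun p : V2 × V2 => g p.1 p.2))
        (comp2 z j, comp2 z k) (comp2 v j, comp2 v k) (comp2 w j, comp2 w k) := by
  have hzjk : ∀ j k, pairProj j k z ∈ Ω ×ˢ Ω := fun j k => ⟨hz j, hz k⟩
  have hF : Fint N Γv g = fun z => ∑ j, ∑ k,
      (Γv j * Γv k) • ((fun p : V2 × V2 => g p.1 p.2) ∘ pairProj j k) z := rfl
  have hsum : iteratedFDeriv ℝ 2 (Fint N Γv g) z = ∑ j, ∑ k,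
      (Γv j * Γv k) • iteratedFDeriv ℝ 2 ((fun p : V2 × V2 => g p.1 p.2) ∘ pairProj j k) z := by
    have hterm : ∀ j k, ContDiffAt ℝ 2 ((fun p : V2 × V2 => g p.1 p.2) ∘ pairProj j k) z :=
      fun j k => (hg.contDiffAt ((hΩ.prod hΩ).mem_nhds (hzjk j k))).comp z
        (pairProj j k).contDiff.contDiffAt
    rw [hF, iteratedFDeriv_fun_sum_apply fun j _ => ContDiffAt.sum fun k _ =>
      (hterm j k).const_smul _]
    refine Finset.sum_congr rfl fun j _ => ?_
    rw [iteratedFDeriv_fun_sum_apply fun k _ => (hterm j k).const_smul _]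
    exact Finset.sum_congr rfl fun k _ => iteratedFDeriv_const_smul_apply' (hterm j k)
  calc fderiv ℝ (fderiv ℝ (Fint N Γv g)) z v w = iteratedFDeriv ℝ 2 (Fint N Γv g) z ![v, w] :=
        (iteratedFDeriv_two_apply (Fint N Γv g) z ![v, w]).symm
    _ = _ := by
        rw [hsum]
        simp only [sum_apply, smul_apply, iteratedFDeriv_two_apply, smul_eq_mul]
        refine Finset.sum_congr rfl fun j _ => Finset.sum_congr rfl fun k _ => ?_
        rw [fderiv_fderiv_comp_continuousLinearMap (hΩ.prod hΩ) hg _ (hzjk j k)]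
        rfl

theorem fderiv_fderiv_diag_apply (hΩ : IsOpen Ω)
    (hg : ContDiffOn ℝ 2 (fun p : V2 × V2 => g p.1 p.2) (Ω ×ˢ Ω)) {a : V2} (ha : a ∈ Ω)
    (b u : V2) :
    fderiv ℝ (fderiv ℝ (fun x => g x x)) a b u =
      fderiv ℝ (fderiv ℝ (fun p : V2 × V2 => g p.1 p.2)) (a, a) (b, b) (u, u) :=
  fderiv_fderiv_comp_continuousLinearMap (hΩ.prod hΩ) hg
    ((ContinuousLinearMap.id ℝ V2).prod (ContinuousLinearMap.id ℝ V2)) (x := a) ⟨ha, ha⟩ b u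

theorem fderiv_fderiv_Fint_diagPh (hΩ : IsOpen Ω)
    (hg : ContDiffOn ℝ 2 (fun p : V2 × V2 => g p.1 p.2) (Ω ×ˢ Ω)) {a : V2} (ha : a ∈ Ω)
    (b : V2) (w : Ph N) :
    fderiv ℝ (fderiv ℝ (Fint N Γv g)) (diagPh N a) (diagPh N b) w =
      Gtot N Γv * ∑ j, Γv j * fderiv ℝ (fderiv ℝ (fun x => g x x)) a b (comp2 w j) := by
  rw [fderiv_fderiv_Fint_apply hΩ hg (z := diagPh N a) fun _ => ha]
  simp only [comp2_diagPh, fderiv_fderiv_diag_apply hΩ hg ha]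
  exact sum_sum_mul_apply_pair
    (fderiv ℝ (fderiv ℝ (fun p : V2 × V2 => g p.1 p.2)) (a, a) (b, b)).toLinearMap Γv (comp2 w)

end PointVortex

theorem hessian_Fint_diag_general (N : ℕ) (Γv : Fin N → ℝ)
    (Ω : Set V2) (hΩ : IsOpen Ω) (g : V2 → V2 → ℝ)
    (hg : ContDiffOn ℝ 2 (fun p : V2 × V2 => g p.1 p.2) (Ω ×ˢ Ω))
    (a : V2) (ha : a ∈ Ω) (b : V2) :
    hessOf (Fint N Γv g) (diagPh N a) (diagPh N b) =
      mkPh fun p => Gtot N Γv * Γv p.1 * hessOf (fun x => g x x) a b p.2 := by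
  refine ext_inner_right ℝ fun w => ?_
  rw [inner_hessOf_apply, fderiv_fderiv_Fint_diagPh hΩ hg ha,
    inner_mkPh_mul (fun j => Gtot N Γv * Γv j), Finset.mul_sum]
  simp only [inner_hessOf_apply, mul_assoc]

/-- Hessian of the interaction energy on the diagonal applied to a diagonal vector:
`∇²F(â)·b̂ = Γ M_Γ (∇²h(a)b,…,∇²h(a)b)`. -/
theorem hessian_Fint_diag (N : ℕ) (hN : 2 ≤ N) (Γv : Fin N → ℝ)
    (hΓ : ∀ j, Γv j ≠ 0) (Ω : Set V2) (hΩ : IsOpen Ω) (g : V2 → V2 → ℝ)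
    (hg : ContDiffOn ℝ 2 (fun p : V2 × V2 => g p.1 p.2) (Ω ×ˢ Ω))
    (hgsym : ∀ x ∈ Ω, ∀ y ∈ Ω, g x y = g y x) (a : V2) (ha : a ∈ Ω) (b : V2) :
    hessOf (Fint N Γv g) (diagPh N a) (diagPh N b) =
      mkPh fun p => Gtot N Γv * Γv p.1 * hessOf (fun x => g x x) a b p.2 :=
  hessian_Fint_diag_general N Γv Ω hΩ g hg a ha b

end
end

section
/- For r > 0 define M_r = [[cos(r²)+sin(r²), −2r],[sin(r²)²/r, cos(r²)−sin(r²)]] ∈ ℝ^{2×2}. Then: (i) with e₁ = (1,0), one has M_r e₁ = (1+r²)e₁ + o(r²) as r → 0⁺; (ii) for every r > 0 the characteristic polynomial of M_r is λ² − 2cos(r²)λ + 1 (in particular det M_r = 1), so the complex eigenvalues of M_r are exactly e^{ir²} and e^{−ir²}, and neither eigenvalue equals 1 + r² + o(r²) since e^{±ir²} = 1 ± ir² + o(r²). -/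
noncomputable section

open Real Set Asymptotics Polynomial Function
open scoped Topology
open scoped BigOperators RealInnerProductSpace

/-- The symplectic family `M_r` of Example 4.3. -/
def Mex (r : ℝ) : Matrix (Fin 2) (Fin 2) ℝ :=
  !![Real.cos (r ^ 2) + Real.sin (r ^ 2), -2 * r;
     (Real.sin (r ^ 2)) ^ 2 / r, Real.cos (r ^ 2) - Real.sin (r ^ 2)]

/-!
`det M_r = cos² r² − sin² r² + 2 sin² r² = 1` and `tr M_r = 2 cos r²`, so the eigenvalues of
`M_r` are `e^{±ir²}`. Their imaginary parts `± sin r²` are of exact order `r²`, whereas an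
eigenvalue `1 + r² + o(r²)` would have imaginary part `o(r²)`. On the other hand the first
column of `M_r` is `(cos r² + sin r², sin² r² / r) = (1 + r² + o(r²), O(r³))`.
-/

open Filter
open scoped Matrix

section Asymptotics

variable {α : Type*} {l : Filter α}

lemma HasDerivAt.isLittleO_comp_sub {𝕜 E : Type*} [NontriviallyNormedField 𝕜]
    [NormedAddCommGroup E] [NormedSpace 𝕜 E] {f : 𝕜 → E} {f' : E} (hf : HasDerivAt f f' 0)
    {φ : α → 𝕜} (hφ : Tendsto φ l (𝓝 0)) :
    (fun a => f (φ a) - f 0 - φ a • f') =o[l] φ := by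
  simpa [Function.comp_def] using hf.isLittleO.comp_tendsto hφ

lemma isLittleO_cexp_mul_sub_one_sub (c : ℂ) {φ : α → ℝ} (hφ : Tendsto φ l (𝓝 0)) :
    (fun a => Complex.exp (c * φ a) - 1 - c * φ a) =o[l] φ := by
  have hcφ : Tendsto (fun a => c * (φ a : ℂ)) l (𝓝 0) := by
    simpa using ((Complex.continuous_ofReal.tendsto 0).comp hφ).const_mul c
  have hexp : HasDerivAt Complex.exp 1 0 := by simpa using Complex.hasDerivAt_exp 0
  have hO : (fun a => c * (φ a : ℂ)) =O[l] φ :=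
    .of_bound ‖c‖ (.of_forall fun a => by simp)
  simpa using (hexp.isLittleO_comp_sub hcφ).trans_isBigO hO

end Asymptotics

lemma Mex_mulVec_e₁ (r : ℝ) :
    Mex r *ᵥ ![1, 0] = ![Real.cos (r ^ 2) + Real.sin (r ^ 2), Real.sin (r ^ 2) ^ 2 / r] := by
  ext i; fin_cases i <;> simp [Mex, Matrix.mulVec, dotProduct]

lemma Mex_det {r : ℝ} (hr : r ≠ 0) : (Mex r).det = 1 := by
  rw [Mex, Matrix.det_fin_two_of]
  field_simp
  linear_combination Real.sin_sq_add_cos_sq (r ^ 2)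

lemma Mex_trace (r : ℝ) : (Mex r).trace = 2 * Real.cos (r ^ 2) := by
  rw [Mex, Matrix.trace_fin_two_of]; ring

lemma charpoly_map_Mex {r : ℝ} (hr : r ≠ 0) :
    ((Mex r).map (algebraMap ℝ ℂ)).charpoly =
      X ^ 2 - C ((2 * Real.cos (r ^ 2) : ℝ) : ℂ) * X + 1 := by
  rw [Matrix.charpoly_map, Matrix.charpoly_fin_two, Mex_trace, Mex_det hr]
  simp

lemma X_sq_sub_two_cos_mul_X_add_one (θ : ℝ) :
    (X ^ 2 - C ((2 * Real.cos θ : ℝ) : ℂ) * X + 1 : ℂ[X]) =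
      (X - C (Complex.exp (Complex.I * θ))) * (X - C (Complex.exp (-(Complex.I * θ)))) := by
  have hsum : ((2 * Real.cos θ : ℝ) : ℂ) =
      Complex.exp (Complex.I * θ) + Complex.exp (-(Complex.I * θ)) := by
    push_cast; rw [Complex.two_cos, neg_mul, mul_comm (θ : ℂ)]
  have hprod : Complex.exp (Complex.I * θ) * Complex.exp (-(Complex.I * θ)) = 1 := by
    rw [← Complex.exp_add, add_neg_cancel, Complex.exp_zero]
  have hC : C (Complex.exp (Complex.I * θ)) * C (Complex.exp (-(Complex.I * θ))) = 1 := by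
    rw [← C_mul, hprod, C_1]
  rw [hsum, C_add]
  linear_combination -hC

lemma isRoot_X_sq_sub_two_cos_mul_X_add_one_iff (θ : ℝ) (μ : ℂ) :
    (X ^ 2 - C ((2 * Real.cos θ : ℝ) : ℂ) * X + 1 : ℂ[X]).IsRoot μ ↔
      μ = Complex.exp (Complex.I * θ) ∨ μ = Complex.exp (-(Complex.I * θ)) := by
  rw [X_sq_sub_two_cos_mul_X_add_one, root_mul, root_X_sub_C, root_X_sub_C, eq_comm,
    @eq_comm _ (Complex.exp _)]

lemma abs_im_of_isRoot_X_sq_sub_two_cos_mul_X_add_one {θ : ℝ} {μ : ℂ}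
    (hμ : (X ^ 2 - C ((2 * Real.cos θ : ℝ) : ℂ) * X + 1 : ℂ[X]).IsRoot μ) :
    |μ.im| = |Real.sin θ| := by
  rcases (isRoot_X_sq_sub_two_cos_mul_X_add_one_iff θ μ).1 hμ with rfl | rfl
  · rw [mul_comm, Complex.exp_ofReal_mul_I_im]
  · rw [show -(Complex.I * θ) = ((-θ : ℝ) : ℂ) * Complex.I by push_cast; ring,
      Complex.exp_ofReal_mul_I_im, Real.sin_neg, abs_neg]

lemma isLittleO_sin_sq_sq_div_self :
    (fun r : ℝ => Real.sin (r ^ 2) ^ 2 / r) =o[𝓝 0] fun r => r ^ 2 := by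
  refine (IsBigO.of_bound' (.of_forall fun r => ?_)).trans_isLittleO
    (isLittleO_pow_pow (by norm_num : 2 < 3))
  rcases eq_or_ne r 0 with rfl | hr
  · simp
  rw [Real.norm_eq_abs, Real.norm_eq_abs, abs_div, div_le_iff₀ (abs_pos.2 hr), abs_pow]
  calc |Real.sin (r ^ 2)| ^ 2 ≤ |r ^ 2| ^ 2 :=
        pow_le_pow_left₀ (abs_nonneg _) Real.abs_sin_le_abs 2
    _ = |r ^ 3| * |r| := by simp only [abs_pow]; ring

lemma Mex_mulVec_e₁_sub_isLittleO :
    (fun r : ℝ => Mex r *ᵥ ![1, 0] - ![1 + r ^ 2, 0]) =o[𝓝 0] fun r => r ^ 2 := by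
  have hsq : Tendsto (fun r : ℝ => r ^ 2) (𝓝 0) (𝓝 0) :=
    (continuous_pow 2).tendsto' 0 0 (by norm_num)
  have hcos_add_sin : HasDerivAt (fun x => Real.cos x + Real.sin x) 1 0 :=
    ((Real.hasDerivAt_cos 0).add (Real.hasDerivAt_sin 0)).congr_deriv (by simp)
  simp only [Mex_mulVec_e₁]
  rw [isLittleO_pi, Fin.forall_fin_two]
  exact ⟨by simpa [sub_sub] using hcos_add_sin.isLittleO_comp_sub hsq,
    by simpa using isLittleO_sin_sq_sq_div_self⟩

lemma not_exists_root_Mex_isLittleO :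
    ¬ ∃ lam : ℝ → ℂ,
      (∀ r ∈ Ioo (0 : ℝ) 1, ((Mex r).map (algebraMap ℝ ℂ)).charpoly.IsRoot (lam r)) ∧
      (fun r : ℝ => lam r - 1 - ((r ^ 2 : ℝ) : ℂ)) =o[𝓝[>] (0 : ℝ)] fun r : ℝ => r ^ 2 := by
  rintro ⟨lam, hroot, hlam⟩
  have hsq : Tendsto (fun r : ℝ => r ^ 2) (𝓝[>] 0) (𝓝 0) :=
    ((continuous_pow 2).tendsto' 0 0 (by norm_num)).mono_left nhdsWithin_le_nhds
  have hsin : (fun r : ℝ => Real.sin (r ^ 2)) =o[𝓝[>] 0] fun r => r ^ 2 := by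
    refine (IsBigO.of_bound' ?_).trans_isLittleO hlam
    filter_upwards [Ioo_mem_nhdsGT one_pos] with r hr
    have him := abs_im_of_isRoot_X_sq_sub_two_cos_mul_X_add_one
      (charpoly_map_Mex hr.1.ne' ▸ hroot r hr)
    rw [Real.norm_eq_abs, ← him]
    simpa only [Complex.sub_im, Complex.one_im, Complex.ofReal_im, sub_zero] using
      Complex.abs_im_le_norm (lam r - 1 - ((r ^ 2 : ℝ) : ℂ))
  refine isLittleO_irrefl ?_ ((Real.isEquivalent_sin.comp_tendsto hsq).symm.trans_isLittleO hsin)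
  refine Eventually.frequently ?_
  filter_upwards [self_mem_nhdsWithin] with r (hr : 0 < r)
  exact (pow_pos hr 2).ne'

/-- Example 4.3: `M_r e₁ = (1+r²)e₁ + o(r²)`, but the characteristic polynomial of
`M_r` is `λ² − 2cos(r²)λ + 1` (in particular `det M_r = 1`), so the eigenvalues of
`M_r` are exactly `e^{±ir²} = 1 ± ir² + o(r²)` and no eigenvalue is of the form
`1 + r² + o(r²)`. -/
theorem eigenvalue_counterexample :
    ((fun r : ℝ => Matrix.mulVec (Mex r) ![1, 0] - ![1 + r ^ 2, 0])
      =o[𝓝[>] (0 : ℝ)] fun r => r ^ 2) ∧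
    (∀ r : ℝ, 0 < r →
      ((Mex r).map (algebraMap ℝ ℂ)).charpoly =
        Polynomial.X ^ 2 -
          Polynomial.C ((2 * Real.cos (r ^ 2) : ℝ) : ℂ) * Polynomial.X + 1 ∧
      (Mex r).det = 1 ∧
      (∀ μ : ℂ, ((Mex r).map (algebraMap ℝ ℂ)).charpoly.IsRoot μ ↔
        μ = Complex.exp (Complex.I * ((r ^ 2 : ℝ) : ℂ)) ∨
        μ = Complex.exp (-(Complex.I * ((r ^ 2 : ℝ) : ℂ))))) ∧
    ((fun r : ℝ => Complex.exp (Complex.I * ((r ^ 2 : ℝ) : ℂ)) - 1 -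
        Complex.I * ((r ^ 2 : ℝ) : ℂ)) =o[𝓝[>] (0 : ℝ)] fun r : ℝ => r ^ 2) ∧
    ((fun r : ℝ => Complex.exp (-(Complex.I * ((r ^ 2 : ℝ) : ℂ))) - 1 +
        Complex.I * ((r ^ 2 : ℝ) : ℂ)) =o[𝓝[>] (0 : ℝ)] fun r : ℝ => r ^ 2) ∧
    ¬ ∃ lam : ℝ → ℂ,
        (∀ r ∈ Ioo (0 : ℝ) 1, ((Mex r).map (algebraMap ℝ ℂ)).charpoly.IsRoot (lam r)) ∧
        (fun r : ℝ => lam r - 1 - ((r ^ 2 : ℝ) : ℂ)) =o[𝓝[>] (0 : ℝ)] fun r : ℝ => r ^ 2 := by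
  have hsq : Tendsto (fun r : ℝ => r ^ 2) (𝓝[>] 0) (𝓝 0) :=
    ((continuous_pow 2).tendsto' 0 0 (by norm_num)).mono_left nhdsWithin_le_nhds
  refine ⟨Mex_mulVec_e₁_sub_isLittleO.mono nhdsWithin_le_nhds, fun r hr => ?_,
    isLittleO_cexp_mul_sub_one_sub Complex.I hsq,
    by simpa using isLittleO_cexp_mul_sub_one_sub (-Complex.I) hsq,
    not_exists_root_Mex_isLittleO⟩
  rw [charpoly_map_Mex hr.ne']
  exact ⟨rfl, Mex_det hr.ne', isRoot_X_sq_sub_two_cos_mul_X_add_one_iff (r ^ 2)⟩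

end
end
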